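/- Define $S_r(n;q) = \sum_{k=1}^{n} [2k][k]^{2r} q^{(r+1)(n-k)} \binom{2n}{n+k}_q$. Then for all positive integers $n$ and $r$, $S_r(n;q) = [n]^2 S_{r-1}(n;q) - q^r [2n][2n-1] S_{r-1}(n-1;q)$ as polynomials in $q$. -/

import Mathlib

/-!
The recurrence holds summand by summand. For `k < n`, multiplying the identity
`[n]² = [n+k][n-k] + q^(n-k) [k]²` by the `k`-th summand of `S_{r-1}(n)` gives the `k`-th summand
of `S_r(n)` plus a multiple of `[n+k][n-k] [2n, n+k]`, and the absorption identity
`[n+k][n-k] [2n, n+k] = [2n][2n-1] [2n-2, n+k-1]` turns that multiple into `q^r [2n][2n-1]` times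
the `k`-th summand of `S_{r-1}(n-1)`. The top summand `k = n` has no counterpart in
`S_{r-1}(n-1)`, and for it the identity degenerates to `[n]² = q^0 [n]²`.
-/

open Polynomial Finset

/-- The `q`-integer `[n] = 1 + q + ⋯ + q^(n-1)` as a polynomial in `ℤ[q]`. -/
noncomputable def qint (n : ℕ) : Polynomial ℤ := ∑ i ∈ Finset.range n, Polynomial.X ^ i

/-- The Gaussian binomial coefficient `[n choose k]_q` in `ℤ[q]`, via the `q`-Pascal rule. -/
noncomputable def qbinom : ℕ → ℕ → Polynomial ℤ
  | _, 0 => 1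
  | 0, _ + 1 => 0
  | n + 1, k + 1 => qbinom n k + Polynomial.X ^ (k + 1) * qbinom n (k + 1)

/-- `S_r(n;q) = ∑_{k=1}^n [2k][k]^{2r} q^{(r+1)(n-k)} [2n choose n+k]_q`. -/
noncomputable def Spoly (r n : ℕ) : Polynomial ℤ :=
  ∑ k ∈ Finset.Icc 1 n,
    qint (2 * k) * (qint k) ^ (2 * r) * Polynomial.X ^ ((r + 1) * (n - k)) *
      qbinom (2 * n) (n + k)

lemma qint_zero : qint 0 = 0 := by simp [qint]

lemma qint_succ (n : ℕ) : qint (n + 1) = qint n + X ^ n := by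
  simp [qint, Finset.sum_range_succ]

lemma qint_add (a b : ℕ) : qint (a + b) = qint a + X ^ a * qint b := by
  induction b with
  | zero => simp [qint_zero]
  | succ b ih => rw [← add_assoc, qint_succ, ih, qint_succ, pow_add]; ring

lemma qint_add_sq (a k : ℕ) :
    qint (a + k) ^ 2 = qint (a + 2 * k) * qint a + X ^ a * qint k ^ 2 := by
  have hcomm : qint a + X ^ a * qint k = qint k + X ^ k * qint a := by
    rw [← qint_add, ← qint_add, add_comm]
  rw [two_mul, ← add_assoc, qint_add (a + k), qint_add a k]
  linear_combination (X ^ a * qint k) * hcomm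

lemma qbinom_succ_succ (n k : ℕ) :
    qbinom (n + 1) (k + 1) = qbinom n k + X ^ (k + 1) * qbinom n (k + 1) := rfl

lemma qbinom_zero_right (n : ℕ) : qbinom n 0 = 1 := by cases n <;> rfl

lemma qbinom_eq_zero_of_lt : ∀ {n k : ℕ}, n < k → qbinom n k = 0
  | 0, _ + 1, _ => rfl
  | n + 1, k + 1, h => by
      rw [qbinom_succ_succ, qbinom_eq_zero_of_lt (by omega : n < k),
        qbinom_eq_zero_of_lt (by omega : n < k + 1), mul_zero, add_zero]

lemma qint_sub_mul_qbinom_succ (n k : ℕ) :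
    qint (n + 1 - k) * qbinom (n + 1) k = qint (n + 1) * qbinom n k := by
  induction n generalizing k with
  | zero =>
    match k with
    | 0 => simp [qbinom_zero_right]
    | 1 => simp [qint_zero, qbinom_eq_zero_of_lt]
    | j + 2 => simp [qbinom_eq_zero_of_lt]
  | succ n ih =>
    cases k with
    | zero => simp [qbinom_zero_right]
    | succ j =>
      rcases lt_or_ge n j with hnj | hjn
      · rw [show n + 1 + 1 - (j + 1) = 0 by omega, qint_zero,
          qbinom_eq_zero_of_lt (by omega : n + 1 < j + 1)]
        ring
      · have hsplit : qint (n + 1 - j) = qint (n - j) + X ^ (n - j) := by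
          rw [← qint_succ, Nat.sub_add_comm hjn]
        have hexp : (X : ℤ[X]) ^ (j + 1) * X ^ (n - j) = X ^ (n + 1) := by
          rw [← pow_add]; congr 1; omega
        have ih' := ih (j + 1)
        rw [show n + 1 - (j + 1) = n - j by omega] at ih'
        rw [show n + 1 + 1 - (j + 1) = n + 1 - j by omega, qbinom_succ_succ (n + 1),
          qint_succ (n + 1)]
        linear_combination ih j + X ^ (j + 1) * ih'
          + X ^ (j + 1) * qbinom (n + 1) (j + 1) * hsplit
          + (X ^ (j + 1) * X ^ (n - j) - qint (n + 1) - X ^ (n + 1)) * qbinom_succ_succ n j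
          + (qbinom n j + X ^ (j + 1) * qbinom n (j + 1)) * hexp

lemma qint_succ_mul_qbinom_succ_succ (n k : ℕ) :
    qint (k + 1) * qbinom (n + 1) (k + 1) = qint (n + 1) * qbinom n k := by
  induction n generalizing k with
  | zero =>
    cases k with
    | zero => simp [qbinom_succ_succ, qbinom_zero_right, qbinom_eq_zero_of_lt, qint_succ, qint_zero]
    | succ j => simp [qbinom_eq_zero_of_lt]
  | succ n ih =>
    rcases lt_or_ge (n + 1) k with hnk | hkn
    · rw [qbinom_eq_zero_of_lt (by omega : n + 2 < k + 1),
        qbinom_eq_zero_of_lt (by omega : n + 1 < k)]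
      ring
    · have hsplit : qint (n + 2) = qint (k + 1) + X ^ (k + 1) * qint (n + 1 - k) := by
        rw [← qint_add]; congr 1; omega
      rw [qbinom_succ_succ (n + 1) k]
      linear_combination X ^ (k + 1) * ih k - X ^ (k + 1) * qint_sub_mul_qbinom_succ n k
        - qbinom (n + 1) k * hsplit

/-- `[n+k][n-k] [2n, n+k] = [2n][2n-1] [2n-2, n+k-1]`, written with `j = n+k-1` and `m = n-k-1`. -/
lemma qint_mul_qint_mul_qbinom (j m : ℕ) :
    qint (j + 1) * qint (m + 1) * qbinom (j + m + 2) (j + 1)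
      = qint (j + m + 2) * qint (j + m + 1) * qbinom (j + m) j := by
  have hA := qint_succ_mul_qbinom_succ_succ (j + m + 1) j
  have hB := qint_sub_mul_qbinom_succ (j + m) j
  rw [show j + m + 1 - j = m + 1 by omega] at hB
  linear_combination qint (m + 1) * hA + qint (j + m + 2) * hB

noncomputable def spolyTerm (r n k : ℕ) : ℤ[X] :=
  qint (2 * k) * qint k ^ (2 * r) * X ^ ((r + 1) * (n - k)) * qbinom (2 * n) (n + k)

lemma spoly_eq_sum (r n : ℕ) : Spoly r n = ∑ k ∈ Icc 1 n, spolyTerm r n k := rfl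

lemma spolyTerm_succ_of_lt {r n k : ℕ} (hk : k < n) :
    spolyTerm (r + 1) n k = qint n ^ 2 * spolyTerm r n k
      - X ^ (r + 1) * qint (2 * n) * qint (2 * n - 1) * spolyTerm r (n - 1) k := by
  obtain ⟨a, rfl⟩ : ∃ a, n = a + k + 1 := ⟨n - k - 1, by omega⟩
  have hsq : qint (a + k + 1) ^ 2
      = qint (a + k + 1 + k) * qint (a + 1) + X ^ (a + 1) * qint k ^ 2 := by
    convert qint_add_sq (a + 1) k using 3 <;> first | omega | (congr 1; omega)
  have hbinom : qint (a + k + 1 + k) * qint (a + 1) * qbinom (2 * (a + k + 1)) (a + k + 1 + k)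
      = qint (2 * (a + k + 1)) * qint (2 * (a + k + 1) - 1)
        * qbinom (2 * (a + k + 1 - 1)) (a + k + 1 - 1 + k) := by
    convert qint_mul_qint_mul_qbinom (a + 2 * k) a using 3 <;> first | omega | (congr 1; omega)
  simp only [spolyTerm, show a + k + 1 - k = a + 1 by omega, show a + k + 1 - 1 - k = a by omega]
  linear_combination
    -(qint (2 * k) * qint k ^ (2 * r) * X ^ ((r + 1) * (a + 1))
        * qbinom (2 * (a + k + 1)) (a + k + 1 + k)) * hsq
    - qint (2 * k) * qint k ^ (2 * r) * X ^ ((r + 1) * (a + 1)) * hbinom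

lemma spolyTerm_succ_self (r n : ℕ) :
    spolyTerm (r + 1) n n = qint n ^ 2 * spolyTerm r n n := by
  simp only [spolyTerm, Nat.sub_self, mul_zero, pow_zero]
  ring

theorem stmt_2 (n r : ℕ) (hn : 0 < n) (hr : 0 < r) :
    Spoly r n = (qint n) ^ 2 * Spoly (r - 1) n
      - Polynomial.X ^ r * qint (2 * n) * qint (2 * n - 1) * Spoly (r - 1) (n - 1) := by
  obtain ⟨s, rfl⟩ : ∃ s, r = s + 1 := ⟨r - 1, by omega⟩
  obtain ⟨m, rfl⟩ : ∃ m, n = m + 1 := ⟨n - 1, by omega⟩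
  have hlower : ∑ k ∈ Icc 1 m, spolyTerm (s + 1) (m + 1) k
      = ∑ k ∈ Icc 1 m, (qint (m + 1) ^ 2 * spolyTerm s (m + 1) k
          - X ^ (s + 1) * qint (2 * (m + 1)) * qint (2 * (m + 1) - 1) * spolyTerm s m k) :=
    sum_congr rfl fun k hk => spolyTerm_succ_of_lt (Nat.lt_succ_of_le (mem_Icc.mp hk).2)
  simp only [Nat.add_sub_cancel, spoly_eq_sum, sum_Icc_succ_top (by omega : 1 ≤ m + 1),
    hlower, spolyTerm_succ_self, sum_sub_distrib, mul_sum, mul_add]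
  ring
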